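/- Let A be a pushdown automaton in normal form and π an accepting run for w whose level l satisfies l ≥ |A|²·|Γ|, containing an |A|²·|Γ|-level (i,j,k) with k ≤ p. Then the factorization w = uvxyz at positions lp(g), lp(h), fp(h), fp(g) (for repeated full states g < h) satisfies |vxy| ≤ p. -/

import Mathlib

/-!
Since `g ≤ h` lie between the stack heights at `i` and `j`, and in normal form the stack height
moves by one per step, the four times are ordered `lp(g) ≤ lp(h) ≤ j ≤ fp(h) ≤ fp(g) ≤ k`.
So `vxy` is the word read on `[lp(g), fp(g))`, which takes at most `k ≤ p` steps.
-/

/-- A pushdown automaton with state type `Q`, input alphabet `A`, stack alphabet `Γ`.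
A transition pops the topmost stack symbol and pushes a string of stack symbols
(head = new top). -/
structure PDA (Q A Γ : Type) where
  init : Q
  startSym : Γ
  final : Set Q
  trans : Q → Option A → Γ → Set (Q × List Γ)

namespace PDA

variable {Q A Γ : Type}

/-- One step of the automaton: pop the top symbol `Z` and push the string `β`. -/
def Step (M : PDA Q A Γ) (c : Q × List Γ) (a : Option A) (c' : Q × List Γ) : Prop :=
  ∃ Z rest β, c.2 = Z :: rest ∧ (c'.1, β) ∈ M.trans c.1 a Z ∧ c'.2 = β ++ rest

/-- A run of length `m`: a sequence of configurations connected by steps. -/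
structure Run (M : PDA Q A Γ) (m : ℕ) where
  conf : ℕ → Q × List Γ
  label : ℕ → Option A
  ok : ∀ t < m, M.Step (conf t) (label t) (conf (t + 1))

/-- Stack size at time `t`. -/
def Run.s {M : PDA Q A Γ} {m : ℕ} (r : M.Run m) (t : ℕ) : ℕ := (r.conf t).2.length

/-- The input word read between steps `a` (inclusive) and `b` (exclusive). -/
def Run.read {M : PDA Q A Γ} {m : ℕ} (r : M.Run m) (a b : ℕ) : List A :=
  ((List.range' a (b - a)).map r.label).reduceOption

/-- The run is an accepting run for the word `w`. -/
def Run.Accepting {M : PDA Q A Γ} {m : ℕ} (r : M.Run m) (w : List A) : Prop :=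
  r.conf 0 = (M.init, [M.startSym]) ∧ (r.conf m).1 ∈ M.final ∧ r.read 0 m = w

/-- The automaton accepts `w` iff some run accepts it. -/
def Accepts (M : PDA Q A Γ) (w : List A) : Prop := ∃ m, ∃ r : M.Run m, r.Accepting w

/-- Normal form: every transition pops the top symbol and pushes either nothing or
the popped symbol together with exactly one additional symbol. -/
def NormalForm (M : PDA Q A Γ) : Prop :=
  ∀ q a Z q' β, (q', β) ∈ M.trans q a Z → β = [] ∨ ∃ Y, β = [Y, Z]

/-- `(i, j, k)` is an `N`-level of the run `r`. -/
def Run.IsLevel {M : PDA Q A Γ} {m : ℕ} (r : M.Run m) (N i j k : ℕ) : Prop :=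
  i < j ∧ j < k ∧ k ≤ m ∧ r.s i = r.s k ∧ r.s j = r.s i + N ∧
    (∀ n, i ≤ n → n ≤ j → r.s i ≤ r.s n ∧ r.s n ≤ r.s j) ∧
    (∀ n, j ≤ n → n ≤ k → r.s k ≤ r.s n ∧ r.s n ≤ r.s j)

/-- The run has an `N`-level. -/
def Run.HasLevel {M : PDA Q A Γ} {m : ℕ} (r : M.Run m) (N : ℕ) : Prop :=
  ∃ i j k, r.IsLevel N i j k

/-- The level of the run is `l`: the maximal `N` such that the run has an `N`-level. -/
def Run.LevelIs {M : PDA Q A Γ} {m : ℕ} (r : M.Run m) (l : ℕ) : Prop :=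
  r.HasLevel l ∧ ∀ N, r.HasLevel N → N ≤ l

/-- `lp(h)`: the last time `≤ j` at which the stack has size `h`. -/
noncomputable def Run.lp {M : PDA Q A Γ} {m : ℕ} (r : M.Run m) (j h : ℕ) : ℕ :=
  sSup {y | y ≤ j ∧ r.s y = h}

/-- `fp(h)`: the first time `≥ j` at which the stack has size `h`. -/
noncomputable def Run.fp {M : PDA Q A Γ} {m : ℕ} (r : M.Run m) (j h : ℕ) : ℕ :=
  sInf {y | j ≤ y ∧ r.s y = h}

/-- The full state of a stack size `h` (relative to the middle index `j` of a level):
the state at `lp(h)`, the top stack symbol at `lp(h)`, and the state at `fp(h)`. -/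
noncomputable def Run.fullState {M : PDA Q A Γ} {m : ℕ} (r : M.Run m) (j h : ℕ) : Q × Option Γ × Q :=
  ((r.conf (r.lp j h)).1, (r.conf (r.lp j h)).2.head?, (r.conf (r.fp j h)).1)

/-- Extended configuration: the state together with the top `l` stack symbols,
padded with blanks (`none`) if the stack has fewer than `l` symbols. -/
def Run.extConf {M : PDA Q A Γ} {m : ℕ} (r : M.Run m) (l t : ℕ) : Q × List (Option Γ) :=
  ((r.conf t).1, ((r.conf t).2.map some ++ List.replicate l none).take l)

end PDA

/-- `n`-fold concatenation of a word. -/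
def wpow {A : Type} (v : List A) (n : ℕ) : List A := (List.replicate n v).flatten

lemma exists_eq_of_forall_succ_le_add_one (f : ℕ → ℤ) {a b : ℕ} {c : ℤ} (hab : a ≤ b)
    (hstep : ∀ t, a ≤ t → t < b → f (t + 1) ≤ f t + 1) (ha : f a ≤ c) (hb : c ≤ f b) :
    ∃ t, a ≤ t ∧ t ≤ b ∧ f t = c := by
  induction b, hab using Nat.le_induction with
  | base => exact ⟨a, le_rfl, le_rfl, le_antisymm ha hb⟩
  | succ b hab ih =>
    by_cases hcb : c ≤ f b
    · obtain ⟨t, hat, htb, hft⟩ := ih (fun t hat htb => hstep t hat (by omega)) hcb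
      exact ⟨t, hat, by omega, hft⟩
    · have := hstep b hab (by omega)
      exact ⟨b + 1, by omega, le_rfl, by omega⟩

namespace PDA

variable {Q A Γ : Type} {M : PDA Q A Γ} {m : ℕ}

theorem NormalForm.s_succ_eq_or (hnf : M.NormalForm) (r : M.Run m) {t : ℕ} (ht : t < m) :
    r.s (t + 1) = r.s t + 1 ∨ r.s (t + 1) + 1 = r.s t := by
  obtain ⟨Z, rest, β, hpop, htrans, hpush⟩ := r.ok t ht
  rcases hnf _ _ _ _ _ htrans with rfl | ⟨Y, rfl⟩ <;>
    simp [Run.s, hpop, hpush]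

namespace Run

variable (r : M.Run m)

theorem length_read_le (a b : ℕ) : (r.read a b).length ≤ b - a :=
  (List.reduceOption_length_le _).trans (by simp)

theorem read_append_read {a b c : ℕ} (hab : a ≤ b) (hbc : b ≤ c) :
    r.read a b ++ r.read b c = r.read a c := by
  obtain ⟨d, rfl⟩ := Nat.exists_eq_add_of_le hab
  obtain ⟨e, rfl⟩ := Nat.exists_eq_add_of_le hbc
  simp only [read]
  rw [← List.reduceOption_append, ← List.map_append, Nat.add_sub_cancel_left,
    Nat.add_sub_cancel_left, Nat.add_assoc, Nat.add_sub_cancel_left, List.range'_append_1]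

theorem exists_s_eq_of_le_of_le (hnf : M.NormalForm) {a b c : ℕ} (hab : a ≤ b) (hbm : b ≤ m)
    (ha : r.s a ≤ c) (hb : c ≤ r.s b) : ∃ t, a ≤ t ∧ t ≤ b ∧ r.s t = c := by
  obtain ⟨t, hat, htb, hst⟩ := exists_eq_of_forall_succ_le_add_one (fun t => (r.s t : ℤ))
    (c := c) hab (fun t _ htb => by have := hnf.s_succ_eq_or r (t := t) (by omega); omega)
    (by exact_mod_cast ha) (by exact_mod_cast hb)
  exact ⟨t, hat, htb, by exact_mod_cast hst⟩

theorem exists_s_eq_of_ge_of_ge (hnf : M.NormalForm) {a b c : ℕ} (hab : a ≤ b) (hbm : b ≤ m)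
    (ha : c ≤ r.s a) (hb : r.s b ≤ c) : ∃ t, a ≤ t ∧ t ≤ b ∧ r.s t = c := by
  obtain ⟨t, hat, htb, hst⟩ := exists_eq_of_forall_succ_le_add_one (fun t => -(r.s t : ℤ))
    (c := -c) hab (fun t _ htb => by have := hnf.s_succ_eq_or r (t := t) (by omega); omega)
    (by simpa using ha) (by simpa using hb)
  exact ⟨t, hat, htb, by simpa using hst⟩

theorem lp_le (j c : ℕ) : r.lp j c ≤ j :=
  csSup_le' fun _ hy => hy.1

theorem s_lp {j c : ℕ} (hc : ∃ t ≤ j, r.s t = c) : r.s (r.lp j c) = c :=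
  (Nat.sSup_mem hc ⟨j, fun _ hy => hy.1⟩).2

theorem le_lp {j c y : ℕ} (hy : y ≤ j) (hs : r.s y = c) : y ≤ r.lp j c :=
  le_csSup ⟨j, fun _ hy => hy.1⟩ ⟨hy, hs⟩

theorem fp_spec {j c : ℕ} (hc : ∃ t, j ≤ t ∧ r.s t = c) : j ≤ r.fp j c ∧ r.s (r.fp j c) = c :=
  Nat.sInf_mem hc

theorem fp_le {j c y : ℕ} (hy : j ≤ y) (hs : r.s y = c) : r.fp j c ≤ y :=
  Nat.sInf_le ⟨hy, hs⟩

theorem lp_le_lp (hnf : M.NormalForm) {j g h : ℕ} (hjm : j ≤ m) (hg : ∃ t ≤ j, r.s t = g)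
    (hgh : g ≤ h) (hhj : h ≤ r.s j) : r.lp j g ≤ r.lp j h := by
  obtain ⟨t, hgt, htj, hst⟩ :=
    r.exists_s_eq_of_le_of_le hnf (r.lp_le j g) hjm (by rw [r.s_lp hg]; exact hgh) hhj
  exact hgt.trans (r.le_lp htj hst)

theorem fp_le_fp (hnf : M.NormalForm) {j g h : ℕ} (hg : ∃ t, j ≤ t ∧ t ≤ m ∧ r.s t = g)
    (hgh : g ≤ h) (hhj : h ≤ r.s j) : r.fp j h ≤ r.fp j g := by
  obtain ⟨t₀, hjt₀, ht₀m, hst₀⟩ := hg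
  obtain ⟨hjg, hsg⟩ := r.fp_spec ⟨t₀, hjt₀, hst₀⟩
  obtain ⟨t, hjt, htg, hst⟩ := r.exists_s_eq_of_ge_of_ge hnf hjg
    ((r.fp_le hjt₀ hst₀).trans ht₀m) hhj (by rw [hsg]; exact hgh)
  exact (r.fp_le hjt hst).trans htg

variable {r}

theorem IsLevel.mid_le {N i j k : ℕ} (hL : r.IsLevel N i j k) : j ≤ m :=
  hL.2.1.le.trans hL.2.2.1

theorem IsLevel.exists_s_eq_left (hnf : M.NormalForm) {N i j k c : ℕ} (hL : r.IsLevel N i j k)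
    (hic : r.s i ≤ c) (hcj : c ≤ r.s j) : ∃ t ≤ j, r.s t = c := by
  obtain ⟨t, -, htj, hst⟩ := r.exists_s_eq_of_le_of_le hnf hL.1.le hL.mid_le hic hcj
  exact ⟨t, htj, hst⟩

theorem IsLevel.exists_s_eq_right (hnf : M.NormalForm) {N i j k c : ℕ} (hL : r.IsLevel N i j k)
    (hic : r.s i ≤ c) (hcj : c ≤ r.s j) : ∃ t, j ≤ t ∧ t ≤ k ∧ r.s t = c :=
  r.exists_s_eq_of_ge_of_ge hnf hL.2.1.le hL.2.2.1 hcj (hL.2.2.2.1 ▸ hic)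

end Run

end PDA

theorem case2_vxy_short_general {Q A Γ : Type} [Fintype Q] [Fintype Γ] {M : PDA Q A Γ}
    {m : ℕ} (hnf : M.NormalForm) (r : M.Run m)
    {i j k : ℕ}
    (hNlev : r.IsLevel (Fintype.card Q ^ 2 * Fintype.card Γ) i j k)
    (hkp : k ≤ Fintype.card Q * (Fintype.card Γ + 1) ^ (Fintype.card Q ^ 2 * Fintype.card Γ))
    {g h : ℕ} (hgl : r.s i ≤ g) (hgh : g < h) (hhu : h ≤ r.s j)
    (v x y : List A)
    (hv : v = r.read (r.lp j g) (r.lp j h)) (hx : x = r.read (r.lp j h) (r.fp j h))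
    (hy : y = r.read (r.fp j h) (r.fp j g)) :
    (v ++ x ++ y).length ≤
      Fintype.card Q * (Fintype.card Γ + 1) ^ (Fintype.card Q ^ 2 * Fintype.card Γ) := by
  have hgj : g ≤ r.s j := by omega
  obtain ⟨t, hjt, htk, hst⟩ := hNlev.exists_s_eq_right hnf hgl hgj
  have hlp := r.lp_le_lp hnf hNlev.mid_le (hNlev.exists_s_eq_left hnf hgl hgj) hgh.le hhu
  have hfp := r.fp_le_fp hnf ⟨t, hjt, htk.trans hNlev.2.2.1, hst⟩ hgh.le hhu
  obtain ⟨t', hjt', -, hst'⟩ := hNlev.exists_s_eq_right hnf (by omega) hhu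
  have hmid : r.lp j h ≤ r.fp j h := (r.lp_le j h).trans (r.fp_spec ⟨t', hjt', hst'⟩).1
  calc (v ++ x ++ y).length = (r.read (r.lp j g) (r.fp j g)).length := by
        rw [hv, hx, hy, r.read_append_read hlp hmid, r.read_append_read (hlp.trans hmid) hfp]
    _ ≤ r.fp j g - r.lp j g := r.length_read_le _ _
    _ ≤ k := by have := r.fp_le hjt hst; omega
    _ ≤ _ := hkp

/-- In Case 2, the factorization at `lp(g), lp(h), fp(h), fp(g)` satisfies
`|vxy| ≤ p` where `p = |Q| · (|Γ| + 1) ^ (|Q|² · |Γ|)`, given that `k ≤ p`. -/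
theorem case2_vxy_short {Q A Γ : Type} [Fintype Q] [Fintype Γ] {M : PDA Q A Γ}
    {m : ℕ} (hnf : M.NormalForm) (r : M.Run m) (w : List A) (hacc : r.Accepting w)
    {l i j k : ℕ} (hlev : r.LevelIs l)
    (hllarge : Fintype.card Q ^ 2 * Fintype.card Γ ≤ l)
    (hNlev : r.IsLevel (Fintype.card Q ^ 2 * Fintype.card Γ) i j k)
    (hkp : k ≤ Fintype.card Q * (Fintype.card Γ + 1) ^ (Fintype.card Q ^ 2 * Fintype.card Γ))
    {g h : ℕ} (hgl : r.s i ≤ g) (hgh : g < h) (hhu : h ≤ r.s j)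
    (hfs : r.fullState j g = r.fullState j h)
    (v x y : List A)
    (hv : v = r.read (r.lp j g) (r.lp j h)) (hx : x = r.read (r.lp j h) (r.fp j h))
    (hy : y = r.read (r.fp j h) (r.fp j g)) :
    (v ++ x ++ y).length ≤
      Fintype.card Q * (Fintype.card Γ + 1) ^ (Fintype.card Q ^ 2 * Fintype.card Γ) :=
  case2_vxy_short_general hnf r hNlev hkp hgl hgh hhu v x y hv hx hy
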